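/- For every t > 0 and every z ∈ ℂ, one has the heat kernel representation H_t(z) = ∫_ℝ H_0(z − 2i√t·v) · (1/√π) · e^{−v²} dv. -/

import Mathlib

open Real MeasureTheory Set Filter

noncomputable def Phi (u : ℝ) : ℝ :=
  ∑' n : ℕ, (2 * Real.pi ^ 2 * (n + 1 : ℝ) ^ 4 * Real.exp (9 * u)
      - 3 * Real.pi * (n + 1 : ℝ) ^ 2 * Real.exp (5 * u))
    * Real.exp (-Real.pi * (n + 1 : ℝ) ^ 2 * Real.exp (4 * u))

noncomputable def phiTerm (u : ℝ) (n : ℕ) : ℝ :=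
  (2 * Real.pi ^ 2 * (n + 1 : ℝ) ^ 4 * Real.exp (9 * u)
      - 3 * Real.pi * (n + 1 : ℝ) ^ 2 * Real.exp (5 * u))
    * Real.exp (-Real.pi * (n + 1 : ℝ) ^ 2 * Real.exp (4 * u))

lemma Phi_eq (u : ℝ) : Phi u = ∑' n, phiTerm u n := rfl

lemma term_abs_le (P Q m E : ℝ) (hP : 0 ≤ P) (hQ : 0 ≤ Q) (hm : 1 ≤ m) (hE : 0 ≤ E) :
    |(2 * Real.pi ^ 2 * m ^ 4 * P - 3 * Real.pi * m ^ 2 * Q)| * E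
      ≤ (2 * Real.pi ^ 2 + 3 * Real.pi) * m ^ 4 * (P + Q) * E := by
  have hpi := Real.pi_pos
  have hm0 : (0:ℝ) ≤ m := le_trans zero_le_one hm
  have hm24 : m ^ 2 ≤ m ^ 4 := by nlinarith [sq_nonneg m, sq_nonneg (m - 1), sq_nonneg (m + 1)]
  have h1 : |(2 * Real.pi ^ 2 * m ^ 4 * P - 3 * Real.pi * m ^ 2 * Q)|
      ≤ (2 * Real.pi ^ 2 + 3 * Real.pi) * m ^ 4 * (P + Q) := by
    have h2 := abs_sub (2 * Real.pi ^ 2 * m ^ 4 * P) (3 * Real.pi * m ^ 2 * Q)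
    have hA : |2 * Real.pi ^ 2 * m ^ 4 * P| = 2 * Real.pi ^ 2 * m ^ 4 * P := abs_of_nonneg (by positivity)
    have hB : |3 * Real.pi * m ^ 2 * Q| = 3 * Real.pi * m ^ 2 * Q := abs_of_nonneg (by positivity)
    have h3 : 3 * Real.pi * m ^ 2 * Q ≤ 3 * Real.pi * m ^ 4 * Q := by
      have := mul_le_mul_of_nonneg_right hm24 hQ
      nlinarith
    have h4 : (0:ℝ) ≤ 2 * Real.pi ^ 2 * m ^ 4 * Q := by positivity
    have h5 : (0:ℝ) ≤ 3 * Real.pi * m ^ 4 * P := by positivity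
    rw [hA, hB] at h2
    nlinarith
  exact mul_le_mul_of_nonneg_right h1 hE

lemma phiTerm_abs_le (u : ℝ) (n : ℕ) :
    ‖phiTerm u n‖ ≤ (2 * Real.pi ^ 2 + 3 * Real.pi) * ((n : ℝ) + 1) ^ 4
      * (Real.exp (9 * u) + Real.exp (5 * u))
      * Real.exp (-Real.pi * ((n : ℝ) + 1) ^ 2 * Real.exp (4 * u)) := by
  rw [phiTerm, Real.norm_eq_abs, abs_mul, abs_of_pos (Real.exp_pos _)]
  exact term_abs_le _ _ _ _ (Real.exp_pos _).le (Real.exp_pos _).le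
    (le_add_of_nonneg_left (Nat.cast_nonneg n)) (Real.exp_pos _).le

lemma summable_pow4_exp (x : ℝ) (hx : 0 < x) :
    Summable (fun n : ℕ => ((n : ℝ) + 1) ^ 4 * Real.exp (-(((n : ℝ) + 1) * x))) := by
  set r : ℝ := Real.exp (-x) with hr
  have hr0 : 0 < r := Real.exp_pos _
  have hr1 : r < 1 := by rw [hr, Real.exp_lt_one_iff]; linarith
  have hs : Summable (fun n : ℕ => (n : ℝ) ^ 4 * r ^ n) :=
    summable_pow_mul_geometric_of_norm_lt_one 4 (by rwa [Real.norm_eq_abs, abs_of_pos hr0])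
  have hs' : Summable (fun n : ℕ => ((n + 1 : ℕ) : ℝ) ^ 4 * r ^ (n + 1)) :=
    (summable_nat_add_iff 1).2 hs
  refine hs'.congr fun n => ?_
  have h : r ^ (n + 1) = Real.exp (-(((n : ℝ) + 1) * x)) := by
    rw [hr, ← Real.exp_nat_mul]
    congr 1
    push_cast; ring
  rw [h]
  push_cast
  ring

lemma exp_term_le (m x : ℝ) (hm : 1 ≤ m) (hx : 0 < x) :
    Real.exp (-Real.pi * m ^ 2 * x) ≤ Real.exp (-(m * (Real.pi * x))) := by
  rw [Real.exp_le_exp]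
  have hpi := Real.pi_pos
  nlinarith [mul_nonneg (mul_nonneg (sub_nonneg.2 hm) (le_trans zero_le_one hm)) (mul_pos hpi hx).le]

lemma summable_phiTerm (u : ℝ) : Summable (phiTerm u) := by
  have hx : 0 < Real.pi * Real.exp (4 * u) := by positivity
  have hs := (summable_pow4_exp _ hx).mul_left
    ((2 * Real.pi ^ 2 + 3 * Real.pi) * (Real.exp (9 * u) + Real.exp (5 * u)))
  refine Summable.of_norm_bounded hs ?_
  intro n
  refine le_trans (phiTerm_abs_le u n) ?_
  have h2 : Real.exp (-Real.pi * ((n : ℝ) + 1) ^ 2 * Real.exp (4 * u))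
      ≤ Real.exp (-(((n : ℝ) + 1) * (Real.pi * Real.exp (4 * u)))) := by
    have := exp_term_le ((n : ℝ) + 1) (Real.exp (4 * u))
      (le_add_of_nonneg_left (Nat.cast_nonneg n)) (Real.exp_pos _)
    convert this using 3
  have hc : (0:ℝ) ≤ (2 * Real.pi ^ 2 + 3 * Real.pi) * ((n : ℝ) + 1) ^ 4
      * (Real.exp (9 * u) + Real.exp (5 * u)) := by positivity
  calc (2 * Real.pi ^ 2 + 3 * Real.pi) * ((n : ℝ) + 1) ^ 4
      * (Real.exp (9 * u) + Real.exp (5 * u))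
      * Real.exp (-Real.pi * ((n : ℝ) + 1) ^ 2 * Real.exp (4 * u))
      ≤ (2 * Real.pi ^ 2 + 3 * Real.pi) * ((n : ℝ) + 1) ^ 4
      * (Real.exp (9 * u) + Real.exp (5 * u))
      * Real.exp (-(((n : ℝ) + 1) * (Real.pi * Real.exp (4 * u)))) :=
        mul_le_mul_of_nonneg_left h2 hc
    _ = (2 * Real.pi ^ 2 + 3 * Real.pi) * (Real.exp (9 * u) + Real.exp (5 * u))
      * (((n : ℝ) + 1) ^ 4 * Real.exp (-(((n : ℝ) + 1) * (Real.pi * Real.exp (4 * u))))) := by ring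

lemma continuous_phiTerm (n : ℕ) : Continuous (fun u => phiTerm u n) := by
  unfold phiTerm; fun_prop

lemma measurable_Phi : Measurable Phi := by
  apply measurable_of_tendsto_metrizable
    (f := fun N => fun u => ∑ n ∈ Finset.range N, phiTerm u n)
  · intro N
    exact (continuous_finset_sum _ fun n _ => continuous_phiTerm n).measurable
  · rw [tendsto_pi_nhds]
    intro u
    exact (summable_phiTerm u).hasSum.tendsto_sum_nat

lemma summable_Cphi_aux : Summable (fun n : ℕ =>
    (2 * Real.pi ^ 2 + 3 * Real.pi) * 2 * ((n : ℝ) + 1) ^ 4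
      * Real.exp (-(((n : ℝ) + 1) * (Real.pi / 2)))) := by
  refine ((summable_pow4_exp (Real.pi / 2) (by positivity)).mul_left
    ((2 * Real.pi ^ 2 + 3 * Real.pi) * 2)).congr fun n => by ring

noncomputable def Cphi : ℝ := ∑' n : ℕ,
  (2 * Real.pi ^ 2 + 3 * Real.pi) * 2 * ((n : ℝ) + 1) ^ 4
    * Real.exp (-(((n : ℝ) + 1) * (Real.pi / 2)))

lemma Cphi_nonneg : 0 ≤ Cphi :=
  tsum_nonneg fun n => by positivity

lemma Phi_abs_le {u : ℝ} (hu : 0 ≤ u) :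
    |Phi u| ≤ Cphi * Real.exp (9 * u - Real.pi / 2 * Real.exp (4 * u)) := by
  have hX : 1 ≤ Real.exp (4 * u) := by
    rw [← Real.exp_zero]; exact Real.exp_le_exp.2 (by linarith)
  have hsum := summable_Cphi_aux.hasSum.mul_right
    (Real.exp (9 * u - Real.pi / 2 * Real.exp (4 * u)))
  rw [Phi_eq, ← Real.norm_eq_abs]
  refine tsum_of_norm_bounded hsum ?_
  intro n
  have hm : 1 ≤ ((n : ℝ) + 1) := le_add_of_nonneg_left (Nat.cast_nonneg n)
  have hm0 : (0:ℝ) ≤ (n : ℝ) + 1 := by positivity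
  have h59 : Real.exp (5 * u) ≤ Real.exp (9 * u) := Real.exp_le_exp.2 (by linarith)
  have hpi := Real.pi_pos
  have hEE : Real.exp (-Real.pi * ((n : ℝ) + 1) ^ 2 * Real.exp (4 * u))
      ≤ Real.exp (-(((n : ℝ) + 1) * (Real.pi / 2))) * Real.exp (-(Real.pi / 2) * Real.exp (4 * u)) := by
    rw [← Real.exp_add, Real.exp_le_exp]
    set m := ((n : ℝ) + 1) with hmdef
    set X := Real.exp (4 * u) with hXdef
    clear_value m X
    have hX0 : (0:ℝ) ≤ X := by positivity
    have h1 : m ≤ m * X := le_mul_of_one_le_right hm0 hX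
    have h2 : X ≤ m * X := le_mul_of_one_le_left hX0 hm
    have h3 : m * X ≤ m ^ 2 * X := by
      have hmm : m ≤ m ^ 2 := by nlinarith [mul_le_mul_of_nonneg_left hm hm0]
      exact mul_le_mul_of_nonneg_right hmm hX0
    have h4 : m / 2 + X / 2 ≤ m ^ 2 * X := by linarith
    have h5 := mul_le_mul_of_nonneg_left h4 hpi.le
    linarith
  calc ‖phiTerm u n‖
      ≤ (2 * Real.pi ^ 2 + 3 * Real.pi) * ((n : ℝ) + 1) ^ 4
        * (Real.exp (9 * u) + Real.exp (5 * u))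
        * Real.exp (-Real.pi * ((n : ℝ) + 1) ^ 2 * Real.exp (4 * u)) := phiTerm_abs_le u n
    _ ≤ (2 * Real.pi ^ 2 + 3 * Real.pi) * ((n : ℝ) + 1) ^ 4 * (2 * Real.exp (9 * u))
        * (Real.exp (-(((n : ℝ) + 1) * (Real.pi / 2))) * Real.exp (-(Real.pi / 2) * Real.exp (4 * u))) := by
        apply mul_le_mul _ hEE (Real.exp_pos _).le (by positivity)
        apply mul_le_mul_of_nonneg_left (by linarith) (by positivity)
    _ = ((2 * Real.pi ^ 2 + 3 * Real.pi) * 2 * ((n : ℝ) + 1) ^ 4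
        * Real.exp (-(((n : ℝ) + 1) * (Real.pi / 2))))
        * Real.exp (9 * u - Real.pi / 2 * Real.exp (4 * u)) := by
        rw [show 9 * u - Real.pi / 2 * Real.exp (4 * u)
            = 9 * u + (-(Real.pi / 2) * Real.exp (4 * u)) by ring, Real.exp_add]
        ring

lemma two_cube_le_exp {u : ℝ} (hu : 0 ≤ u) : 2 * u ^ 3 ≤ Real.exp (4 * u) := by
  have h1 : 4 * u / 3 + 1 ≤ Real.exp (4 * u / 3) := Real.add_one_le_exp _
  have h2 : (4 * u / 3 + 1) ^ 3 ≤ (Real.exp (4 * u / 3)) ^ 3 :=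
    pow_le_pow_left₀ (by positivity) h1 3
  have h3 : (Real.exp (4 * u / 3)) ^ 3 = Real.exp (4 * u) := by
    rw [← Real.exp_nat_mul]; congr 1; push_cast; ring
  nlinarith [pow_nonneg hu 3, sq_nonneg u, hu]

lemma integrable_weight (a b : ℝ) :
    IntegrableOn (fun u => Real.exp (a * u ^ 2 + b * u - Real.pi / 2 * Real.exp (4 * u)))
      (Set.Ioi (0:ℝ)) := by
  set R : ℝ := 4 * (1 + |a| + |b|) with hR
  have hcont : Continuous
      (fun u : ℝ => Real.exp (a * u ^ 2 + b * u - Real.pi / 2 * Real.exp (4 * u))) := by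
    fun_prop
  have h1 : IntegrableOn
      (fun u : ℝ => Real.exp (a * u ^ 2 + b * u - Real.pi / 2 * Real.exp (4 * u)))
      (Set.Ioc (0:ℝ) R) := hcont.integrableOn_Ioc
  have h2 : IntegrableOn
      (fun u : ℝ => Real.exp (a * u ^ 2 + b * u - Real.pi / 2 * Real.exp (4 * u)))
      (Set.Ioi R) := by
    refine Integrable.mono' (exp_neg_integrableOn_Ioi R zero_lt_one)
      (hcont.aestronglyMeasurable.restrict) ?_
    filter_upwards [ae_restrict_mem measurableSet_Ioi] with u hu
    rw [Real.norm_eq_abs, abs_of_pos (Real.exp_pos _), Real.exp_le_exp]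
    have habs : 0 ≤ |a| := abs_nonneg a
    have hbabs : 0 ≤ |b| := abs_nonneg b
    have huR : R ≤ u := le_of_lt hu
    have hu4 : 4 ≤ u := by rw [hR] at huR; nlinarith
    have hu0 : 0 ≤ u := by linarith
    have hu1 : 1 ≤ u := by linarith
    have hcube := two_cube_le_exp hu0
    have hpi : 3 ≤ Real.pi := Real.pi_gt_three.le
    have hexp : 3 * u ^ 3 ≤ Real.pi / 2 * Real.exp (4 * u) := by
      have : (3:ℝ) / 2 * (2 * u ^ 3) ≤ 3 / 2 * Real.exp (4 * u) :=
        mul_le_mul_of_nonneg_left hcube (by norm_num)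
      have h32 : (3:ℝ) / 2 * Real.exp (4 * u) ≤ Real.pi / 2 * Real.exp (4 * u) := by
        apply mul_le_mul_of_nonneg_right _ (Real.exp_pos _).le
        linarith
      linarith
    have hA : a * u ^ 2 ≤ |a| * u ^ 2 := mul_le_mul_of_nonneg_right (le_abs_self a) (sq_nonneg u)
    have huu : u ≤ u ^ 2 := by nlinarith
    have hB : b * u ≤ |b| * u ^ 2 := by
      have hb1 : b * u ≤ |b| * u := mul_le_mul_of_nonneg_right (le_abs_self b) hu0
      have hb2 : |b| * u ≤ |b| * u ^ 2 := mul_le_mul_of_nonneg_left huu hbabs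
      linarith
    have hmain : |a| * u ^ 2 + |b| * u ^ 2 + u ^ 2 ≤ 3 * u ^ 3 := by
      have h5 : 3 * u ≥ 12 * (1 + |a| + |b|) := by rw [hR] at huR; linarith
      nlinarith [sq_nonneg u, mul_le_mul_of_nonneg_right h5 (sq_nonneg u)]
    calc a * u ^ 2 + b * u - Real.pi / 2 * Real.exp (4 * u)
        ≤ |a| * u ^ 2 + |b| * u ^ 2 - 3 * u ^ 3 := by linarith
      _ ≤ -u ^ 2 := by linarith
      _ ≤ -1 * u := by nlinarith
  have hsub : Set.Ioi (0:ℝ) ⊆ Set.Ioc 0 R ∪ Set.Ioi R := by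
    intro x hx
    rcases le_or_gt x R with h | h
    · exact Or.inl ⟨hx, h⟩
    · exact Or.inr h
  exact (h1.union h2).mono_set hsub

lemma integrable_Phi_mul (a b : ℝ) :
    IntegrableOn (fun u => |Phi u| * Real.exp (a * u ^ 2 + b * u)) (Set.Ioi (0:ℝ)) := by
  refine Integrable.mono' ((integrable_weight a (b + 9)).const_mul Cphi) ?_ ?_
  · exact ((measurable_Phi.abs.mul
      (by fun_prop : Measurable fun u : ℝ => Real.exp (a * u ^ 2 + b * u)))).aestronglyMeasurable.restrict
  · filter_upwards [ae_restrict_mem measurableSet_Ioi] with u hu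
    have hu0 : (0:ℝ) ≤ u := le_of_lt hu
    rw [Real.norm_eq_abs, abs_of_nonneg (by positivity)]
    have h1 := Phi_abs_le hu0
    calc |Phi u| * Real.exp (a * u ^ 2 + b * u)
        ≤ (Cphi * Real.exp (9 * u - Real.pi / 2 * Real.exp (4 * u)))
          * Real.exp (a * u ^ 2 + b * u) :=
          mul_le_mul_of_nonneg_right h1 (Real.exp_pos _).le
      _ = Cphi * Real.exp (a * u ^ 2 + (b + 9) * u - Real.pi / 2 * Real.exp (4 * u)) := by
          rw [mul_assoc, ← Real.exp_add]; congr 2; ring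

open Complex in
lemma gauss_integral (c d : ℂ) :
    ∫ v : ℝ, Complex.exp (-1 * (v:ℂ)^2 + c * v + d)
      = (Real.sqrt Real.pi : ℂ) * Complex.exp (d + c ^ 2 / 4) := by
  have h := integral_cexp_quadratic (b := (-1:ℂ)) (by norm_num) c d
  rw [h]
  congr 1
  · rw [neg_neg, div_one]
    rw [show (Real.sqrt Real.pi : ℂ) = ((Real.pi ^ (1/2 : ℝ) : ℝ) : ℂ) by
      rw [Real.sqrt_eq_rpow]]
    rw [Complex.ofReal_cpow Real.pi_pos.le]
    norm_num
  · congr 1; ring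

open Complex in
lemma heat_inner (t : ℝ) (ht : 0 ≤ t) (z : ℂ) (u : ℝ) :
    ((Real.exp (t * u ^ 2) : ℝ) : ℂ) * Complex.cos (z * (u:ℂ)) =
    ∫ v : ℝ, Complex.cos ((z - 2 * Complex.I * (Real.sqrt t : ℂ) * (v:ℂ)) * (u:ℂ))
      * (((1 / Real.sqrt Real.pi) * Real.exp (-v ^ 2) : ℝ) : ℂ) := by
  set s : ℝ := Real.sqrt t with hs
  have hst : s ^ 2 = t := Real.sq_sqrt ht
  have hstC : ((s:ℂ)) ^ 2 = (t:ℂ) := by exact_mod_cast congrArg (fun x : ℝ => (x:ℂ)) hst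
  have hsp : (Real.sqrt Real.pi : ℂ) ≠ 0 := by
    simp only [ne_eq, Complex.ofReal_eq_zero]
    positivity
  have key : ∀ v : ℝ,
      Complex.cos ((z - 2 * Complex.I * (s:ℂ) * (v:ℂ)) * (u:ℂ))
        * (((1 / Real.sqrt Real.pi) * Real.exp (-v ^ 2) : ℝ) : ℂ)
      = ((1 / Real.sqrt Real.pi : ℝ) : ℂ) * 2⁻¹ *
        (Complex.exp (-1 * (v:ℂ)^2 + ((2*s*u : ℝ) : ℂ) * (v:ℂ) + z * u * Complex.I)
         + Complex.exp (-1 * (v:ℂ)^2 + ((-(2*s*u) : ℝ) : ℂ) * (v:ℂ) + (- (z * u * Complex.I)))) := by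
    intro v
    have hg : (((1 / Real.sqrt Real.pi) * Real.exp (-v ^ 2) : ℝ) : ℂ)
        = ((1 / Real.sqrt Real.pi : ℝ) : ℂ) * Complex.exp (-1 * (v:ℂ)^2) := by
      rw [Complex.ofReal_mul, Complex.ofReal_exp]
      push_cast
      ring_nf
    set w : ℂ := (z - 2 * Complex.I * (s:ℂ) * (v:ℂ)) * (u:ℂ) with hw
    have e1 : Complex.exp (w * I) * Complex.exp (-1 * (v:ℂ)^2)
        = Complex.exp (-1 * (v:ℂ)^2 + ((2*s*u : ℝ) : ℂ) * (v:ℂ) + z * u * Complex.I) := by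
      rw [← Complex.exp_add]
      congr 1
      rw [hw]
      push_cast
      linear_combination (-2*(s:ℂ)*(v:ℂ)*(u:ℂ)) * Complex.I_sq
    have e2 : Complex.exp (-w * I) * Complex.exp (-1 * (v:ℂ)^2)
        = Complex.exp (-1 * (v:ℂ)^2 + ((-(2*s*u) : ℝ) : ℂ) * (v:ℂ) + (- (z * u * Complex.I))) := by
      rw [← Complex.exp_add]
      congr 1
      rw [hw]
      push_cast
      linear_combination (2*(s:ℂ)*(v:ℂ)*(u:ℂ)) * Complex.I_sq
    rw [hg, Complex.cos, ← e1, ← e2]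
    ring
  rw [integral_congr_ae (Filter.Eventually.of_forall key)]
  rw [MeasureTheory.integral_const_mul,
    MeasureTheory.integral_add
      (integrable_cexp_quadratic' (b := (-1:ℂ)) (by norm_num) _ _)
      (integrable_cexp_quadratic' (b := (-1:ℂ)) (by norm_num) _ _),
    gauss_integral, gauss_integral]
  have q1 : z * u * Complex.I + ((2*s*u : ℝ) : ℂ) ^ 2 / 4 = z * u * Complex.I + (t:ℂ) * (u:ℂ)^2 := by
    push_cast
    linear_combination (u:ℂ)^2 * hstC
  have q2 : -(z * u * Complex.I) + ((-(2*s*u) : ℝ) : ℂ) ^ 2 / 4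
      = -(z * u * Complex.I) + (t:ℂ) * (u:ℂ)^2 := by
    push_cast
    linear_combination (u:ℂ)^2 * hstC
  rw [q1, q2, Complex.exp_add, Complex.exp_add]
  rw [Complex.cos, Complex.ofReal_exp]
  have : ((t * u ^ 2 : ℝ) : ℂ) = (t:ℂ) * (u:ℂ)^2 := by push_cast; ring
  rw [this]
  have hneg : Complex.exp (-(z * (u:ℂ)) * I) = Complex.exp (-(z * (u:ℂ) * I)) := by ring_nf
  rw [hneg]
  rw [Complex.ofReal_div, Complex.ofReal_one]
  field_simp

lemma abs_cos_le (w : ℂ) : ‖Complex.cos w‖ ≤ Real.exp |w.im| := by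
  rw [Complex.cos]
  have h1 : ‖Complex.exp (w * Complex.I)‖ = Real.exp (-w.im) := by
    rw [Complex.norm_exp, Complex.mul_I_re]
  have h2 : ‖Complex.exp (-w * Complex.I)‖ = Real.exp w.im := by
    rw [Complex.norm_exp, Complex.mul_I_re]
    simp
  have hb : ‖Complex.exp (w * Complex.I) + Complex.exp (-w * Complex.I)‖
      ≤ Real.exp (-w.im) + Real.exp w.im := by
    refine le_trans (norm_add_le _ _) ?_
    rw [h1, h2]
  have e1 : Real.exp (-w.im) ≤ Real.exp |w.im| := Real.exp_le_exp.2 (neg_le_abs _)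
  have e2 : Real.exp w.im ≤ Real.exp |w.im| := Real.exp_le_exp.2 (le_abs_self _)
  calc ‖(Complex.exp (w * Complex.I) + Complex.exp (-w * Complex.I)) / 2‖
      = ‖Complex.exp (w * Complex.I) + Complex.exp (-w * Complex.I)‖ / 2 := by
        rw [norm_div]
        norm_num
    _ ≤ Real.exp |w.im| := by linarith

lemma gauss_dom (c v : ℝ) (hc : 0 ≤ c) :
    Real.exp (2 * c * |v| - v ^ 2)
      ≤ Real.exp (c ^ 2) * (Real.exp (-(v - c) ^ 2) + Real.exp (-(v + c) ^ 2)) := by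
  rcases abs_cases v with ⟨h1, h2⟩ | ⟨h1, h2⟩
  · rw [h1, show 2 * c * v - v ^ 2 = c ^ 2 + (-(v - c) ^ 2) by ring, Real.exp_add]
    have := Real.exp_pos (-(v + c) ^ 2)
    nlinarith [Real.exp_pos (c ^ 2)]
  · rw [h1, show 2 * c * -v - v ^ 2 = c ^ 2 + (-(v + c) ^ 2) by ring, Real.exp_add]
    have := Real.exp_pos (-(v - c) ^ 2)
    nlinarith [Real.exp_pos (c ^ 2)]

lemma bound_cos (z : ℂ) (s u v : ℝ) (hs0 : 0 ≤ s) (hu : 0 ≤ u) :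
    ‖Complex.cos ((z - 2 * Complex.I * (s:ℂ) * (v:ℂ)) * (u:ℂ))‖
      ≤ Real.exp (|z.im| * u) * Real.exp (2 * (s * u) * |v|) := by
  refine le_trans (abs_cos_le _) ?_
  rw [← Real.exp_add, Real.exp_le_exp]
  have him : ((z - 2 * Complex.I * (s:ℂ) * (v:ℂ)) * (u:ℂ)).im = (z.im - 2 * s * v) * u := by
    simp only [Complex.sub_im, Complex.mul_im, Complex.mul_re, Complex.I_re,
      Complex.I_im, Complex.ofReal_re, Complex.ofReal_im, Complex.sub_re, Complex.re_ofNat,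
      Complex.im_ofNat]
    ring
  rw [him, abs_mul, abs_of_nonneg hu]
  have h1 : |z.im - 2 * s * v| ≤ |z.im| + 2 * s * |v| := by
    refine le_trans (abs_sub _ _) ?_
    have : |2 * s * v| = 2 * s * |v| := by
      rw [abs_mul, abs_of_nonneg (by linarith : (0:ℝ) ≤ 2 * s)]
    rw [this]
  have := mul_le_mul_of_nonneg_right h1 hu
  nlinarith [abs_nonneg v]

noncomputable def H (t : ℝ) (z : ℂ) : ℂ :=
  ∫ u in Set.Ioi (0 : ℝ),
    ((Real.exp (t * u ^ 2) * Phi u : ℝ) : ℂ) * Complex.cos (z * (u : ℂ))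

/-- Heat kernel representation of `H_t`. -/
theorem heat_kernel_representation (t : ℝ) (ht : 0 < t) (z : ℂ) :
    H t z = ∫ v : ℝ, H 0 (z - 2 * Complex.I * (Real.sqrt t : ℂ) * (v : ℂ)) *
      (((1 / Real.sqrt Real.pi) * Real.exp (-v ^ 2) : ℝ) : ℂ) := by
  set s : ℝ := Real.sqrt t with hs
  have hs0 : 0 ≤ s := Real.sqrt_nonneg t
  have hst : s ^ 2 = t := Real.sq_sqrt ht.le
  have hπ : Real.sqrt Real.pi ≠ 0 := ne_of_gt (Real.sqrt_pos.2 Real.pi_pos)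
  set f : ℝ → ℝ → ℂ := fun u v =>
    ((Phi u : ℝ) : ℂ) * (Complex.cos ((z - 2 * Complex.I * (s:ℂ) * (v:ℂ)) * (u:ℂ))
      * (((1 / Real.sqrt Real.pi) * Real.exp (-v ^ 2) : ℝ) : ℂ)) with hf
  -- gaussian integrability facts
  have hgauss : Integrable (fun v : ℝ => Real.exp (-v ^ 2)) := by
    have := integrable_exp_neg_mul_sq (b := (1:ℝ)) one_pos
    simpa using this
  have hshift : ∀ c : ℝ, Integrable (fun v : ℝ => Real.exp (-(v - c) ^ 2)) :=
    fun c => hgauss.comp_sub_right c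
  have hshift' : ∀ c : ℝ, Integrable (fun v : ℝ => Real.exp (-(v + c) ^ 2)) :=
    fun c => by simpa [sub_neg_eq_add] using hshift (-c)
  have hIgauss : ∀ c : ℝ, (∫ v : ℝ, Real.exp (-(v - c) ^ 2)) = Real.sqrt Real.pi := by
    intro c
    rw [integral_sub_right_eq_self (fun x : ℝ => Real.exp (-x ^ 2)) c]
    have := integral_gaussian 1
    simpa using this
  have hIgauss' : ∀ c : ℝ, (∫ v : ℝ, Real.exp (-(v + c) ^ 2)) = Real.sqrt Real.pi := by
    intro c
    have := hIgauss (-c)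
    simpa [sub_neg_eq_add] using this
  -- the dominating function
  set B : ℝ → ℝ → ℝ := fun u v =>
    (|Phi u| * Real.exp (|z.im| * u) * (1 / Real.sqrt Real.pi) * Real.exp (t * u ^ 2))
      * (Real.exp (-(v - s * u) ^ 2) + Real.exp (-(v + s * u) ^ 2)) with hB
  have hBint : ∀ u : ℝ, Integrable (fun v => B u v) :=
    fun u => ((hshift (s * u)).add (hshift' (s * u))).const_mul _
  have hfB : ∀ u : ℝ, 0 ≤ u → ∀ v : ℝ, ‖f u v‖ ≤ B u v := by
    intro u hu v
    have hg0 : (0:ℝ) ≤ 1 / Real.sqrt Real.pi * Real.exp (-v ^ 2) := by positivity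
    have hnorm : ‖f u v‖ = |Phi u|
        * (‖Complex.cos ((z - 2 * Complex.I * (s:ℂ) * (v:ℂ)) * (u:ℂ))‖
          * (1 / Real.sqrt Real.pi * Real.exp (-v ^ 2))) := by
      rw [hf]
      rw [norm_mul, norm_mul, Complex.norm_real, Complex.norm_real, Real.norm_eq_abs,
        Real.norm_eq_abs, abs_of_nonneg hg0]
    rw [hnorm]
    calc |Phi u| * (‖Complex.cos ((z - 2 * Complex.I * (s:ℂ) * (v:ℂ)) * (u:ℂ))‖
          * (1 / Real.sqrt Real.pi * Real.exp (-v ^ 2)))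
        ≤ |Phi u| * ((Real.exp (|z.im| * u) * Real.exp (2 * (s * u) * |v|))
          * (1 / Real.sqrt Real.pi * Real.exp (-v ^ 2))) := by
          apply mul_le_mul_of_nonneg_left
            (mul_le_mul_of_nonneg_right (bound_cos z s u v hs0 hu) hg0) (abs_nonneg _)
      _ = |Phi u| * Real.exp (|z.im| * u) * (1 / Real.sqrt Real.pi)
          * (Real.exp (2 * (s * u) * |v|) * Real.exp (-v ^ 2)) := by ring
      _ = |Phi u| * Real.exp (|z.im| * u) * (1 / Real.sqrt Real.pi)
          * Real.exp (2 * (s * u) * |v| - v ^ 2) := by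
          rw [← Real.exp_add, sub_eq_add_neg]
      _ ≤ |Phi u| * Real.exp (|z.im| * u) * (1 / Real.sqrt Real.pi)
          * (Real.exp ((s * u) ^ 2) * (Real.exp (-(v - s * u) ^ 2)
            + Real.exp (-(v + s * u) ^ 2))) := by
          apply mul_le_mul_of_nonneg_left (gauss_dom (s * u) v (mul_nonneg hs0 hu))
            (by positivity)
      _ = B u v := by
          rw [hB, mul_pow, hst]
          ring
  -- measurability on the product
  have hcont : Continuous (fun p : ℝ × ℝ =>
      Complex.cos ((z - 2 * Complex.I * (s:ℂ) * (p.2:ℂ)) * (p.1:ℂ))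
        * (((1 / Real.sqrt Real.pi) * Real.exp (-p.2 ^ 2) : ℝ) : ℂ)) := by fun_prop
  have hmeas : AEStronglyMeasurable (Function.uncurry f)
      ((volume.restrict (Set.Ioi 0)).prod volume) := by
    have : Measurable (Function.uncurry f) := by
      apply Measurable.mul
      · exact Complex.measurable_ofReal.comp (measurable_Phi.comp measurable_fst)
      · exact hcont.measurable
    exact this.aestronglyMeasurable
  -- product integrability
  have hii : ∀ᵐ u ∂(volume.restrict (Set.Ioi (0:ℝ))), Integrable (fun v => f u v) := by
    filter_upwards [ae_restrict_mem measurableSet_Ioi] with u hu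
    refine Integrable.mono' (hBint u) ?_ (Filter.Eventually.of_forall (hfB u (le_of_lt hu)))
    apply Continuous.aestronglyMeasurable
    fun_prop
  have hiii : Integrable (fun u => ∫ v, ‖f u v‖) (volume.restrict (Set.Ioi (0:ℝ))) := by
    refine Integrable.mono' ((integrable_Phi_mul t |z.im|).mul_const 2)
      ?_ ?_
    · exact (hmeas.norm.integral_prod_right' : _)
    · filter_upwards [ae_restrict_mem measurableSet_Ioi] with u hu
      have h1 : (∫ v, ‖f u v‖) ≤ ∫ v, B u v :=
        integral_mono_of_nonneg (Filter.Eventually.of_forall fun v => norm_nonneg _)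
          (hBint u) (Filter.Eventually.of_forall (hfB u (le_of_lt hu)))
      have h2 : (∫ v, B u v) = (|Phi u| * Real.exp (|z.im| * u) * (1 / Real.sqrt Real.pi)
          * Real.exp (t * u ^ 2)) * (Real.sqrt Real.pi + Real.sqrt Real.pi) := by
        rw [hB]
        rw [MeasureTheory.integral_const_mul,
          integral_add (hshift (s * u)) (hshift' (s * u)), hIgauss, hIgauss']
      have h3 : (∫ v, B u v) = |Phi u| * Real.exp (t * u ^ 2 + |z.im| * u) * 2 := by
        rw [h2, Real.exp_add]
        field_simp
        ring
      rw [Real.norm_eq_abs, abs_of_nonneg (integral_nonneg fun v => norm_nonneg _)]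
      rw [← h3]
      exact h1
  have hint : Integrable (Function.uncurry f) ((volume.restrict (Set.Ioi 0)).prod volume) :=
    (integrable_prod_iff hmeas).2 ⟨hii, hiii⟩
  -- step 1 : rewrite the integrand of H t z
  have step1 : H t z = ∫ u in Set.Ioi (0:ℝ), ∫ v : ℝ, f u v := by
    simp only [H]
    refine integral_congr_ae (Filter.Eventually.of_forall fun u => ?_)
    calc ((Real.exp (t * u ^ 2) * Phi u : ℝ) : ℂ) * Complex.cos (z * (u:ℂ))
        = ((Phi u : ℝ) : ℂ) * (((Real.exp (t * u ^ 2) : ℝ) : ℂ) * Complex.cos (z * (u:ℂ))) := by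
          push_cast
          ring
      _ = ((Phi u : ℝ) : ℂ) * ∫ v : ℝ,
            Complex.cos ((z - 2 * Complex.I * (s:ℂ) * (v:ℂ)) * (u:ℂ))
              * (((1 / Real.sqrt Real.pi) * Real.exp (-v ^ 2) : ℝ) : ℂ) := by
          rw [heat_inner t ht.le z u]
      _ = ∫ v : ℝ, f u v := (MeasureTheory.integral_const_mul _ _).symm
  have step2 : (∫ u in Set.Ioi (0:ℝ), ∫ v : ℝ, f u v)
      = ∫ v : ℝ, ∫ u in Set.Ioi (0:ℝ), f u v := integral_integral_swap hint
  have step3 : ∀ v : ℝ, (∫ u in Set.Ioi (0:ℝ), f u v)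
      = H 0 (z - 2 * Complex.I * (s:ℂ) * (v:ℂ))
        * (((1 / Real.sqrt Real.pi) * Real.exp (-v ^ 2) : ℝ) : ℂ) := by
    intro v
    simp only [H, zero_mul, Real.exp_zero, one_mul]
    rw [← MeasureTheory.integral_mul_const]
    exact integral_congr_ae (Filter.Eventually.of_forall fun u => (mul_assoc _ _ _).symm)
  rw [step1, step2]
  exact integral_congr_ae (Filter.Eventually.of_forall step3)
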